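/- Let Q be a compact rectangle in ℝ² of width w and height h. For every λ > 0, the number of pairs of positive integers (m,n) with π²(m²/w² + n²/h²) ≤ λ is at least (wh)λ/(4π) − (w+h)λ^{1/2}/2. -/

import Mathlib

/-!
Put `A = w √λ / π` and `B = h √λ / π`. The condition `π² (m²/w² + n²/h²) ≤ λ` says that `(m, n)`
lies in the quarter ellipse `(x/A)² + (y/B)² ≤ 1`, `x, y > 0`, of area `π A B / 4 = w h λ / (4π)`.
Its column `x = m` contains `⌊g m⌋` lattice points, where `g x = B √(1 - (x/A)²)` is the arc.
As `g` decreases, the area is at most `g 0 + ∑_{m=1}^{⌊A⌋} g m = B + ∑ g m`, and rounding each of the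
`⌊A⌋` columns down loses less than one point, so the count is at least `π A B / 4 - A - B`.
Finally `A + B = (w + h) √λ / π ≤ (w + h) √λ / 2`.
-/

open Real

theorem integral_sqrt_one_sub_sq_zero_one : ∫ x in (0 : ℝ)..1, √(1 - x ^ 2) = π / 4 := by
  have hcont : Continuous fun x : ℝ => √(1 - x ^ 2) := by fun_prop
  have hsymm : ∫ x in (-1 : ℝ)..0, √(1 - x ^ 2) = ∫ x in (0 : ℝ)..1, √(1 - x ^ 2) := by
    have := intervalIntegral.integral_comp_neg (a := 0) (b := 1) fun x : ℝ => √(1 - x ^ 2)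
    simp only [neg_sq, neg_zero] at this
    exact this.symm
  have hsplit := intervalIntegral.integral_add_adjacent_intervals
    (hcont.intervalIntegrable (μ := MeasureTheory.volume) (-1) 0) (hcont.intervalIntegrable 0 1)
  linarith [integral_sqrt_one_sub_sq]

noncomputable def ellipseArc (A B x : ℝ) : ℝ := B * √(1 - (x / A) ^ 2)

section ellipseArc

variable {A B : ℝ}

theorem continuous_ellipseArc : Continuous (ellipseArc A B) := by
  unfold ellipseArc; fun_prop

theorem ellipseArc_nonneg (hB : 0 ≤ B) (x : ℝ) : 0 ≤ ellipseArc A B x :=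
  mul_nonneg hB (sqrt_nonneg _)

theorem antitoneOn_ellipseArc (hB : 0 ≤ B) : AntitoneOn (ellipseArc A B) (Set.Ici 0) := by
  intro x hx y _ hxy
  have hsq : (x / A) ^ 2 ≤ (y / A) ^ 2 := by
    simp only [div_pow]
    gcongr
  exact mul_le_mul_of_nonneg_left (sqrt_le_sqrt (by linarith)) hB

theorem integral_ellipseArc (hA : A ≠ 0) : ∫ x in (0 : ℝ)..A, ellipseArc A B x = π * A * B / 4 := by
  simp only [ellipseArc]
  rw [intervalIntegral.integral_const_mul,
    intervalIntegral.integral_comp_div (fun u => √(1 - u ^ 2)) hA, zero_div, div_self hA,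
    smul_eq_mul, integral_sqrt_one_sub_sq_zero_one]
  ring

theorem sq_div_add_sq_div_le_one_of_le_ellipseArc {x y : ℝ} (hB : 0 < B) (hx : (x / A) ^ 2 ≤ 1)
    (hy : 0 ≤ y) (hyx : y ≤ ellipseArc A B x) : (x / A) ^ 2 + (y / B) ^ 2 ≤ 1 := by
  have : (y / B) ^ 2 ≤ 1 - (x / A) ^ 2 := by
    rw [← sq_sqrt (sub_nonneg.2 hx)]
    gcongr
    rwa [div_le_iff₀' hB]
  linarith

open Finset in
theorem integral_ellipseArc_le_sum (hA : 0 < A) (hB : 0 ≤ B) :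
    π * A * B / 4 ≤ B + ∑ i ∈ range ⌊A⌋₊, ellipseArc A B (i + 1) := by
  have hA_le : A ≤ 0 + ((⌊A⌋₊ + 1 : ℕ) : ℝ) := by
    push_cast; linarith [Nat.lt_floor_add_one A]
  calc π * A * B / 4 = ∫ x in (0 : ℝ)..A, ellipseArc A B x := (integral_ellipseArc hA.ne').symm
    _ ≤ ∫ x in (0 : ℝ)..0 + ((⌊A⌋₊ + 1 : ℕ) : ℝ), ellipseArc A B x :=
      intervalIntegral.integral_mono_interval le_rfl hA.le hA_le
        (Filter.Eventually.of_forall (ellipseArc_nonneg hB))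
        (continuous_ellipseArc.intervalIntegrable _ _)
    _ ≤ ∑ i ∈ range (⌊A⌋₊ + 1), ellipseArc A B (0 + i) :=
      ((antitoneOn_ellipseArc hB).mono Set.Icc_subset_Ici_self).integral_le_sum
    _ = B + ∑ i ∈ range ⌊A⌋₊, ellipseArc A B (i + 1) := by
      rw [sum_range_succ']
      simp [ellipseArc, add_comm]

end ellipseArc

def quarterEllipseLatticePoints (A B : ℝ) : Set (ℕ × ℕ) :=
  {p | 0 < p.1 ∧ 0 < p.2 ∧ ((p.1 : ℝ) / A) ^ 2 + ((p.2 : ℝ) / B) ^ 2 ≤ 1}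

section latticePoints

variable {A B : ℝ}

theorem le_floor_of_sq_div_le_one {m : ℕ} (hA : 0 < A) (h : ((m : ℝ) / A) ^ 2 ≤ 1) : m ≤ ⌊A⌋₊ :=
  Nat.le_floor <| (div_le_one hA).1 <|
    (pow_le_one_iff_of_nonneg (by positivity) two_ne_zero).1 h

theorem quarterEllipseLatticePoints_finite (hA : 0 < A) (hB : 0 < B) :
    (quarterEllipseLatticePoints A B).Finite := by
  refine ((Set.finite_Iic ⌊A⌋₊).prod (Set.finite_Iic ⌊B⌋₊)).subset ?_
  rintro ⟨m, n⟩ ⟨-, -, h⟩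
  exact ⟨le_floor_of_sq_div_le_one hA (by nlinarith),
    le_floor_of_sq_div_le_one hB (by nlinarith)⟩

open Finset in
theorem sum_floor_ellipseArc_le_ncard (hA : 0 < A) (hB : 0 < B) :
    ∑ i ∈ range ⌊A⌋₊, ⌊ellipseArc A B (i + 1)⌋₊ ≤ (quarterEllipseLatticePoints A B).ncard := by
  set columns : Finset (ℕ × ℕ) :=
    (range ⌊A⌋₊).biUnion fun i => {i + 1} ×ˢ Icc 1 ⌊ellipseArc A B (i + 1)⌋₊
  have hcard : #columns = ∑ i ∈ range ⌊A⌋₊, ⌊ellipseArc A B (i + 1)⌋₊ := by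
    rw [card_biUnion]
    · simp
    · intro i _ j _ hij
      exact disjoint_product.2 (Or.inl (by simpa using hij))
  have hsub : (columns : Set (ℕ × ℕ)) ⊆ quarterEllipseLatticePoints A B := by
    rintro ⟨m, n⟩ hp
    obtain ⟨i, hi, hmn⟩ := mem_biUnion.1 hp
    obtain ⟨⟨hn_pos, hn⟩, rfl⟩ : (1 ≤ n ∧ n ≤ ⌊ellipseArc A B (i + 1)⌋₊) ∧ i + 1 = m := by
      simpa using hmn
    have hm : (((i + 1 : ℕ) : ℝ) / A) ^ 2 ≤ 1 := by
      have : ((i + 1 : ℕ) : ℝ) ≤ A :=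
        (Nat.cast_le.2 (mem_range.1 hi)).trans (Nat.floor_le hA.le)
      exact pow_le_one₀ (by positivity) ((div_le_one hA).2 this)
    refine ⟨i.succ_pos, hn_pos, sq_div_add_sq_div_le_one_of_le_ellipseArc hB hm (by positivity) ?_⟩
    exact_mod_cast (Nat.le_floor_iff (ellipseArc_nonneg hB.le _)).1 hn
  rw [← hcard, ← Set.ncard_coe_finset]
  exact Set.ncard_le_ncard hsub (quarterEllipseLatticePoints_finite hA hB)

end latticePoints

open Finset in
theorem ncard_quarterEllipseLatticePoints_ge {A B : ℝ} (hA : 0 < A) (hB : 0 < B) :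
    π * A * B / 4 - A - B ≤ (quarterEllipseLatticePoints A B).ncard := by
  have hround : ∑ i ∈ range ⌊A⌋₊, ellipseArc A B (i + 1) ≤
      ∑ i ∈ range ⌊A⌋₊, ((⌊ellipseArc A B (i + 1)⌋₊ : ℝ) + 1) :=
    sum_le_sum fun i _ => (Nat.lt_floor_add_one _).le
  rw [sum_add_distrib, sum_const, card_range, nsmul_one] at hround
  have hcount : (∑ i ∈ range ⌊A⌋₊, (⌊ellipseArc A B (i + 1)⌋₊ : ℝ)) ≤
      (quarterEllipseLatticePoints A B).ncard := by
    exact_mod_cast sum_floor_ellipseArc_le_ncard hA hB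
  linarith [integral_ellipseArc_le_sum hA hB.le, Nat.floor_le hA.le]

/-- single-rectangle Dirichlet eigenvalue counting lower bound. -/
theorem stmt_3 (w h lam : ℝ) (hw : 0 < w) (hh : 0 < h) (hlam : 0 < lam) :
    (Nat.card {p : ℕ × ℕ // 0 < p.1 ∧ 0 < p.2 ∧
        π^2 * ((p.1:ℝ)^2/w^2 + (p.2:ℝ)^2/h^2) ≤ lam} : ℝ)
      ≥ w*h*lam/(4*π) - (w+h)*Real.sqrt lam/2 := by
  set A := w * √lam / π
  set B := h * √lam / π
  have hsqrt : √lam ^ 2 = lam := sq_sqrt hlam.le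
  have hset : {p : ℕ × ℕ | 0 < p.1 ∧ 0 < p.2 ∧ π^2 * ((p.1:ℝ)^2/w^2 + (p.2:ℝ)^2/h^2) ≤ lam} =
      quarterEllipseLatticePoints A B := by
    ext p
    have : ((p.1 : ℝ) / A) ^ 2 + ((p.2 : ℝ) / B) ^ 2 =
        π^2 * ((p.1:ℝ)^2/w^2 + (p.2:ℝ)^2/h^2) / lam := by
      simp only [A, B, div_pow, mul_pow, hsqrt]
      field_simp
    simp only [quarterEllipseLatticePoints, Set.mem_ofPred_eq, this, div_le_one hlam]
  have harea : π * A * B / 4 = w * h * lam / (4 * π) := by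
    simp only [A, B]
    field_simp
    rw [hsqrt]
  have hperim : A + B ≤ (w + h) * √lam / 2 := by
    simp only [A, B, ← add_div, ← add_mul]
    gcongr
    linarith [pi_gt_three]
  rw [← Set.coe_ofPred, hset, Nat.card_coe_set_eq]
  linarith [ncard_quarterEllipseLatticePoints_ge (A := A) (B := B) (by positivity) (by positivity)]
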